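/- arXiv:2110.05117 — 11 statements merged into one kernel-verified Lean document; each statement's English description precedes it below -/
import Mathlib

section
/- Let E be a real inner product space, Q ⊆ E a convex set, and f : E → ℝ a convex differentiable function whose gradient is L-Lipschitz on Q (‖∇f(x) − ∇f(y)‖ ≤ L‖x − y‖ for all x, y ∈ Q). Suppose g̃ : E → E satisfies ‖g̃(x) − ∇f(x)‖ ≤ Δ for all x ∈ Q, and f_δ : E → ℝ satisfies f_δ(x) ≤ f(x) ≤ f_δ(x) + δ for all x ∈ Q, where Δ, δ ≥ 0. Then for all x, y ∈ Q: f_δ(x) + ⟨g̃(x), y − x⟩ − Δ‖y − x‖ ≤ f(y) ≤ f_δ(x) + ⟨g̃(x), y − x⟩ + (L/2)‖y − x‖² + Δ‖y − x‖ + δ. -/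
/-!
Both bounds are first proved for the exact data `f x`, `∇f(x)`: the lower one is the first-order
characterization of convexity, the upper one the descent lemma, obtained by comparing
`t ↦ f (x + t (y - x))` with its quadratic majorant on `[0, 1]`. Passing to `fδ x` costs nothing
below (as `fδ ≤ f`) and `δ` above, and by Cauchy–Schwarz replacing `∇f(x)` by `g̃(x)` moves the
linear term by at most `Δ ‖y - x‖`.
-/

open scoped RealInnerProductSpace
open Set AffineMap

section

variable {E : Type*} [NormedAddCommGroup E] [InnerProductSpace ℝ E] [CompleteSpace E]

theorem HasGradientAt.hasDerivAt_comp_lineMap {f : E → ℝ} {g x y : E} {t : ℝ}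
    (hf : HasGradientAt f g (lineMap x y t)) :
    HasDerivAt (fun s => f (lineMap x y s)) ⟪g, y - x⟫ t :=
  hf.hasFDerivAt.comp_hasDerivAt t hasDerivAt_lineMap

theorem ConvexOn.add_inner_le_of_hasGradientAt {Q : Set E} {f : E → ℝ} {g x y : E}
    (hf : ConvexOn ℝ Q f) (hg : HasGradientAt f g x) (hx : x ∈ Q) (hy : y ∈ Q) :
    f x + ⟪g, y - x⟫ ≤ f y := by
  have hline : ConvexOn ℝ ((lineMap x y : ℝ →ᵃ[ℝ] E) ⁻¹' Q) (f ∘ lineMap x y) :=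
    hf.comp_affineMap _
  have hderiv : HasDerivAt (f ∘ lineMap x y) ⟪g, y - x⟫ (0 : ℝ) :=
    HasGradientAt.hasDerivAt_comp_lineMap (by rwa [lineMap_apply_zero])
  have := hline.le_slope_of_hasDerivAt (by simpa using hx) (by simpa using hy) one_pos hderiv
  simp only [slope_def_field, Function.comp_apply, lineMap_apply_one, lineMap_apply_zero,
    sub_zero, div_one] at this
  linarith

theorem le_add_inner_add_sq_of_lipschitz_gradient {Q : Set E} (hQ : Convex ℝ Q) {f : E → ℝ}
    {f' : E → E} {L : ℝ} (hf : ∀ z ∈ Q, HasGradientAt f (f' z) z)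
    (hLip : ∀ x ∈ Q, ∀ y ∈ Q, ‖f' x - f' y‖ ≤ L * ‖x - y‖) {x y : E} (hx : x ∈ Q) (hy : y ∈ Q) :
    f y ≤ f x + ⟪f' x, y - x⟫ + L / 2 * ‖y - x‖ ^ 2 := by
  set v := y - x
  have hseg : ∀ t ∈ Icc (0 : ℝ) 1, lineMap x y t ∈ Q := fun t ht => hQ.lineMap_mem hx hy ht
  let φ : ℝ → ℝ := fun t => f (lineMap x y t) - t * ⟪f' x, v⟫ - L / 2 * t ^ 2 * ‖v‖ ^ 2
  have hφ : ∀ t ∈ Icc (0 : ℝ) 1,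
      HasDerivAt φ (⟪f' (lineMap x y t), v⟫ - ⟪f' x, v⟫ - L * t * ‖v‖ ^ 2) t := by
    intro t ht
    have hquad : HasDerivAt (fun s => L / 2 * s ^ 2 * ‖v‖ ^ 2) (L * t * ‖v‖ ^ 2) t :=
      (((hasDerivAt_pow 2 t).const_mul (L / 2)).mul_const (‖v‖ ^ 2)).congr_deriv
        (by simp only [Nat.cast_ofNat, Nat.add_one_sub_one, pow_one]; ring)
    exact ((hf _ (hseg t ht)).hasDerivAt_comp_lineMap.sub (hasDerivAt_mul_const _)).sub hquad
  have hderiv_le : ∀ t ∈ Icc (0 : ℝ) 1, ⟪f' (lineMap x y t), v⟫ - ⟪f' x, v⟫ ≤ L * t * ‖v‖ ^ 2 := by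
    intro t ht
    calc ⟪f' (lineMap x y t), v⟫ - ⟪f' x, v⟫
        = ⟪f' (lineMap x y t) - f' x, v⟫ := (inner_sub_left _ _ _).symm
      _ ≤ ‖f' (lineMap x y t) - f' x‖ * ‖v‖ := real_inner_le_norm _ _
      _ ≤ L * ‖lineMap x y t - x‖ * ‖v‖ := by gcongr; exact hLip _ (hseg t ht) _ hx
      _ = L * t * ‖v‖ ^ 2 := by
        rw [← vsub_eq_sub, lineMap_vsub_left, norm_smul, Real.norm_of_nonneg ht.1, vsub_eq_sub]
        ring
  have hanti : AntitoneOn φ (Icc 0 1) := by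
    refine antitoneOn_of_hasDerivWithinAt_nonpos (convex_Icc 0 1)
      (fun t ht => (hφ t ht).continuousAt.continuousWithinAt)
      (fun t ht => (hφ t (interior_subset ht)).hasDerivWithinAt) fun t ht => ?_
    linarith [hderiv_le t (interior_subset ht)]
  have := hanti (left_mem_Icc.2 zero_le_one) (right_mem_Icc.2 zero_le_one) zero_le_one
  simp only [φ, lineMap_apply_zero, lineMap_apply_one] at this
  linarith

end

theorem inexact_oracle_of_lipschitz_gradient_general
    {E : Type*} [NormedAddCommGroup E] [InnerProductSpace ℝ E] [CompleteSpace E]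
    (Q : Set E) (hQ : Convex ℝ Q)
    (f : E → ℝ) (f' : E → E)
    (hdiff : ∀ x, HasGradientAt f (f' x) x)
    (hconv : ConvexOn ℝ Q f)
    (L Δ δ : ℝ)
    (hLip : ∀ x ∈ Q, ∀ y ∈ Q, ‖f' x - f' y‖ ≤ L * ‖x - y‖)
    (gA : E → E) (hg : ∀ x ∈ Q, ‖gA x - f' x‖ ≤ Δ)
    (fδ : E → ℝ) (hfδ : ∀ x ∈ Q, fδ x ≤ f x ∧ f x ≤ fδ x + δ) :
    ∀ x ∈ Q, ∀ y ∈ Q,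
      fδ x + ⟪gA x, y - x⟫ - Δ * ‖y - x‖ ≤ f y ∧
      f y ≤ fδ x + ⟪gA x, y - x⟫ + L / 2 * ‖y - x‖ ^ 2 + Δ * ‖y - x‖ + δ := by
  intro x hx y hy
  have hlower := hconv.add_inner_le_of_hasGradientAt (hdiff x) hx hy
  have hupper := le_add_inner_add_sq_of_lipschitz_gradient hQ (fun z _ => hdiff z) hLip hx hy
  have herr : |⟪gA x, y - x⟫ - ⟪f' x, y - x⟫| ≤ Δ * ‖y - x‖ := by
    rw [← inner_sub_left]
    exact (abs_real_inner_le_norm _ _).trans (by gcongr; exact hg x hx)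
  obtain ⟨herr_lower, herr_upper⟩ := abs_le.mp herr
  obtain ⟨hfδ_le, hle_fδ⟩ := hfδ x hx
  exact ⟨by linarith, by linarith⟩

/-- If `f` is convex with `L`-Lipschitz gradient on a convex set `Q`, and we have an
inexact gradient `gA` (accuracy `Δ`) and inexact function values `fδ` (accuracy `δ`),
then the `(δ, Δ, L)`-model inequalities hold. -/
theorem inexact_oracle_of_lipschitz_gradient
    {E : Type*} [NormedAddCommGroup E] [InnerProductSpace ℝ E] [CompleteSpace E]
    (Q : Set E) (hQ : Convex ℝ Q)
    (f : E → ℝ) (f' : E → E)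
    (hdiff : ∀ x, HasGradientAt f (f' x) x)
    (hconv : ConvexOn ℝ Q f)
    (L Δ δ : ℝ) (hL : 0 ≤ L) (hΔ : 0 ≤ Δ) (hδ : 0 ≤ δ)
    (hLip : ∀ x ∈ Q, ∀ y ∈ Q, ‖f' x - f' y‖ ≤ L * ‖x - y‖)
    (gA : E → E) (hg : ∀ x ∈ Q, ‖gA x - f' x‖ ≤ Δ)
    (fδ : E → ℝ) (hfδ : ∀ x ∈ Q, fδ x ≤ f x ∧ f x ≤ fδ x + δ) :
    ∀ x ∈ Q, ∀ y ∈ Q,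
      fδ x + ⟪gA x, y - x⟫ - Δ * ‖y - x‖ ≤ f y ∧
      f y ≤ fδ x + ⟪gA x, y - x⟫ + L / 2 * ‖y - x‖ ^ 2 + Δ * ‖y - x‖ + δ :=
  inexact_oracle_of_lipschitz_gradient_general Q hQ f f' hdiff hconv L Δ δ hLip gA hg fδ hfδ
end

section
/- Let E be a real inner product space, d : E → ℝ differentiable, and V(y, x) = d(y) − d(x) − ⟨∇d(x), y − x⟩ the associated Bregman divergence. Let Q ⊆ E, points x*, xᵏ, xᵏ⁺¹ ∈ Q, functions f, f_δ : Q → ℝ with f_δ(x) ≤ f(x) ≤ f_δ(x) + δ for all x ∈ Q, a function ψ : Q → ℝ, and constants L' > 0, Δ', δ', γ ≥ 0. Assume: (i) f(x*) ≥ f_δ(xᵏ) + ψ(x*) − γ‖x* − xᵏ‖ (model lower bound); (ii) ψ(xᵏ⁺¹) ≤ ψ(x*) + L'·(V(x*, xᵏ) − V(x*, xᵏ⁺¹) − V(xᵏ⁺¹, xᵏ)) (three-point inequality for the minimization step); (iii) f_δ(xᵏ⁺¹) ≤ f_δ(xᵏ) + ψ(xᵏ⁺¹) + L'·V(xᵏ⁺¹,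 xᵏ) + Δ'‖xᵏ⁺¹ − xᵏ‖ + δ' (exit criterion of the adaptive step). Then f(xᵏ⁺¹) − f(x*) ≤ L'·V(x*, xᵏ) − L'·V(x*, xᵏ⁺¹) + Δ'‖xᵏ⁺¹ − xᵏ‖ + δ' + δ + γ‖xᵏ − x*‖. -/
open scoped RealInnerProductSpace

/-- Per-iteration inequality for the adaptive gradient method with a
`(δ, γ, Δ, L)`-model of the objective. -/
theorem per_iteration_inequality
    {E : Type*} [NormedAddCommGroup E] [InnerProductSpace ℝ E] [CompleteSpace E]
    (Q : Set E)
    (d : E → ℝ) (d' : E → E) (hd : ∀ x, HasGradientAt d (d' x) x)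
    (V : E → E → ℝ) (hV : ∀ y x, V y x = d y - d x - ⟪d' x, y - x⟫)
    (xs xk xk1 : E) (hxs : xs ∈ Q) (hxk : xk ∈ Q) (hxk1 : xk1 ∈ Q)
    (f fδ : E → ℝ) (δ : ℝ) (hδ : 0 ≤ δ)
    (hfδ : ∀ x ∈ Q, fδ x ≤ f x ∧ f x ≤ fδ x + δ)
    (ψ : E → ℝ)
    (L' Δ' δ' γ : ℝ) (hL' : 0 < L') (hΔ' : 0 ≤ Δ') (hδ' : 0 ≤ δ') (hγ : 0 ≤ γ)
    (hmodel : f xs ≥ fδ xk + ψ xs - γ * ‖xs - xk‖)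
    (hthreept : ψ xk1 ≤ ψ xs + L' * (V xs xk - V xs xk1 - V xk1 xk))
    (hexit : fδ xk1 ≤ fδ xk + ψ xk1 + L' * V xk1 xk + Δ' * ‖xk1 - xk‖ + δ') :
    f xk1 - f xs ≤
      L' * V xs xk - L' * V xs xk1 + Δ' * ‖xk1 - xk‖ + δ' + δ + γ * ‖xk - xs‖ := by
  have h1 := (hfδ xk1 hxk1).2
  have hnorm : ‖xs - xk‖ = ‖xk - xs‖ := norm_sub_rev _ _
  nlinarith [hmodel, hthreept, hexit]
end

section
/- Let E be a real inner product space, Q ⊆ E convex, d : E → ℝ convex and differentiable, and V(y, x) = d(y) − d(x) − ⟨∇d(x), y − x⟩ the associated Bregman divergence. Let f : E → ℝ be convex on Q, let x*, x⁰, x¹, …, x^N ∈ Q, and let L₁, …, L_N > 0, Δ₁, …, Δ_N ≥ 0, δ₁, …, δ_N ≥ 0, δ ≥ 0, γ ≥ 0, R > 0 satisfy V(x*, x⁰) ≤ R² and, for each k = 0, …, N − 1: f(xᵏ⁺¹) − f(x*) ≤ L_{k+1}·(V(x*, xᵏ) − V(x*, xᵏ⁺¹)) + Δ_{k+1}‖xᵏ⁺¹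 − xᵏ‖ + δ_{k+1} + δ + γ‖xᵏ − x*‖. Define S_N = Σ_{k=0}^{N−1} 1/L_{k+1} and x̂ = (1/S_N) Σ_{k=0}^{N−1} xᵏ⁺¹/L_{k+1}. Then f(x̂) − f(x*) ≤ R²/S_N + (1/S_N) Σ_{k=0}^{N−1} (δ_{k+1} + Δ_{k+1}‖xᵏ⁺¹ − xᵏ‖ + γ‖xᵏ − x*‖)/L_{k+1} + δ. -/
open scoped RealInnerProductSpace

lemma bregman_grad_le {E : Type*} [NormedAddCommGroup E] [InnerProductSpace ℝ E]
    [CompleteSpace E]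
    {d : E → ℝ} (hdconv : ConvexOn ℝ Set.univ d) {d' : E → E}
    (hd : ∀ x, HasGradientAt d (d' x) x) (y x : E) :
    ⟪d' x, y - x⟫ ≤ d y - d x := by
  set φ : ℝ →ᵃ[ℝ] E := AffineMap.lineMap x y with hφ
  have hgconv : ConvexOn ℝ (φ ⁻¹' Set.univ) (d ∘ φ) := hdconv.comp_affineMap φ
  have hφfun : (fun t : ℝ => φ t) = fun t : ℝ => t • (y - x) + x := by
    funext t
    simp [hφ, AffineMap.lineMap_apply_module]
    module
  have hderivφ : HasDerivAt (fun t : ℝ => φ t) (y - x) 0 := by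
    rw [hφfun]
    simpa using ((hasDerivAt_id (0 : ℝ)).smul_const (y - x)).add_const x
  have hfd : HasFDerivAt d (InnerProductSpace.toDual ℝ E (d' x)) (φ 0) := by
    have := (hd x).hasFDerivAt
    simpa [hφ] using this
  have hderiv : HasDerivAt (d ∘ φ) ⟪d' x, y - x⟫ 0 := by
    have := hfd.comp_hasDerivAt 0 hderivφ
    simpa [InnerProductSpace.toDual_apply_apply] using this
  have hslope := hgconv.le_slope_of_hasDerivAt (by simp) (by simp) zero_lt_one hderiv
  have h01 : slope (d ∘ φ) 0 1 = d y - d x := by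
    simp [slope_def_field, hφ, Function.comp]
  rw [h01] at hslope
  exact hslope

/-- Main convergence estimate (Theorem 1) for the adaptive gradient method for
convex functions admitting a `(δ, γ, Δ, L)`-model at every point. -/
theorem adaptive_gradient_convergence
    {E : Type*} [NormedAddCommGroup E] [InnerProductSpace ℝ E] [CompleteSpace E]
    (Q : Set E) (hQ : Convex ℝ Q)
    (d : E → ℝ) (hdconv : ConvexOn ℝ Set.univ d)
    (d' : E → E) (hd : ∀ x, HasGradientAt d (d' x) x)
    (V : E → E → ℝ) (hV : ∀ y x, V y x = d y - d x - ⟪d' x, y - x⟫)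
    (f : E → ℝ) (hfconv : ConvexOn ℝ Q f)
    (N : ℕ) (hN : 1 ≤ N)
    (xs : E) (hxs : xs ∈ Q) (x : ℕ → E) (hx : ∀ k ≤ N, x k ∈ Q)
    (L : ℕ → ℝ) (hL : ∀ k < N, 0 < L (k + 1))
    (Δ : ℕ → ℝ) (hΔ : ∀ k < N, 0 ≤ Δ (k + 1))
    (δ' : ℕ → ℝ) (hδ' : ∀ k < N, 0 ≤ δ' (k + 1))
    (δ γ R : ℝ) (hδ : 0 ≤ δ) (hγ : 0 ≤ γ) (hR : 0 < R)
    (hinit : V xs (x 0) ≤ R ^ 2)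
    (hstep : ∀ k < N,
      f (x (k + 1)) - f xs ≤
        L (k + 1) * (V xs (x k) - V xs (x (k + 1))) +
          Δ (k + 1) * ‖x (k + 1) - x k‖ + δ' (k + 1) + δ + γ * ‖x k - xs‖)
    (S : ℝ) (hS : S = ∑ k ∈ Finset.range N, 1 / L (k + 1))
    (xhat : E) (hxhat : xhat = (1 / S) • ∑ k ∈ Finset.range N, (1 / L (k + 1)) • x (k + 1)) :
    f xhat - f xs ≤
      R ^ 2 / S +
        (1 / S) * ∑ k ∈ Finset.range N,
          (δ' (k + 1) + Δ (k + 1) * ‖x (k + 1) - x k‖ + γ * ‖x k - xs‖) / L (k + 1) +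
        δ := by
  have hVnonneg : ∀ z : E, 0 ≤ V xs z := by
    intro z
    rw [hV]
    have := bregman_grad_le hdconv hd xs z
    linarith
  have hSpos : 0 < S := by
    rw [hS]
    apply Finset.sum_pos
    · intro k hk
      exact one_div_pos.mpr (hL k (Finset.mem_range.mp hk))
    · exact ⟨0, Finset.mem_range.mpr hN⟩
  -- weights
  set w : ℕ → ℝ := fun k => (1 / S) * (1 / L (k + 1)) with hw
  have hwnonneg : ∀ k ∈ Finset.range N, 0 ≤ w k := by
    intro k hk
    exact mul_nonneg (by positivity) (le_of_lt (one_div_pos.mpr (hL k (Finset.mem_range.mp hk))))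
  have hwsum : ∑ k ∈ Finset.range N, w k = 1 := by
    rw [hw]
    rw [← Finset.mul_sum, ← hS]
    field_simp
  -- Jensen
  have hjensen : f xhat ≤ ∑ k ∈ Finset.range N, w k * f (x (k + 1)) := by
    have hmem : ∀ k ∈ Finset.range N, x (k + 1) ∈ Q := fun k hk =>
      hx (k + 1) (Nat.succ_le_of_lt (Finset.mem_range.mp hk))
    have := hfconv.map_sum_le hwnonneg hwsum hmem
    have hxe : xhat = ∑ k ∈ Finset.range N, w k • x (k + 1) := by
      rw [hxhat, Finset.smul_sum]
      refine Finset.sum_congr rfl fun k hk => ?_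
      rw [hw, smul_smul]
    rw [hxe]
    simpa using this
  -- step inequalities divided by L
  have hstep' : ∀ k ∈ Finset.range N,
      (1 / L (k + 1)) * (f (x (k + 1)) - f xs) ≤
        (V xs (x k) - V xs (x (k + 1))) +
          (δ' (k + 1) + Δ (k + 1) * ‖x (k + 1) - x k‖ + γ * ‖x k - xs‖) / L (k + 1) +
          δ * (1 / L (k + 1)) := by
    intro k hk
    have hk' := Finset.mem_range.mp hk
    have hLk := hL k hk'
    have h := hstep k hk'
    have h1 := mul_le_mul_of_nonneg_left h (le_of_lt (one_div_pos.mpr hLk))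
    have heq : (1 / L (k + 1)) * (L (k + 1) * (V xs (x k) - V xs (x (k + 1))) +
          Δ (k + 1) * ‖x (k + 1) - x k‖ + δ' (k + 1) + δ + γ * ‖x k - xs‖) =
        (V xs (x k) - V xs (x (k + 1))) +
          (δ' (k + 1) + Δ (k + 1) * ‖x (k + 1) - x k‖ + γ * ‖x k - xs‖) / L (k + 1) +
          δ * (1 / L (k + 1)) := by
      field_simp
      ring
    linarith
  have hsum : ∑ k ∈ Finset.range N, (1 / L (k + 1)) * (f (x (k + 1)) - f xs) ≤
      R ^ 2 +
        (∑ k ∈ Finset.range N,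
          (δ' (k + 1) + Δ (k + 1) * ‖x (k + 1) - x k‖ + γ * ‖x k - xs‖) / L (k + 1)) +
        δ * S := by
    have h1 := Finset.sum_le_sum hstep'
    rw [Finset.sum_add_distrib, Finset.sum_add_distrib] at h1
    have htel : ∑ k ∈ Finset.range N, (V xs (x k) - V xs (x (k + 1))) =
        V xs (x 0) - V xs (x N) := by
      rw [Finset.sum_range_sub' (fun k => V xs (x k))]
    have hmul : ∑ k ∈ Finset.range N, δ * (1 / L (k + 1)) = δ * S := by
      rw [hS, Finset.mul_sum]
    rw [htel, hmul] at h1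
    have := hVnonneg (x N)
    linarith
  -- combine
  have hkey : f xhat - f xs ≤
      (1 / S) * ∑ k ∈ Finset.range N, (1 / L (k + 1)) * (f (x (k + 1)) - f xs) := by
    have h2 : (1 / S) * ∑ k ∈ Finset.range N, (1 / L (k + 1)) * (f (x (k + 1)) - f xs) =
        (∑ k ∈ Finset.range N, w k * f (x (k + 1))) - f xs := by
      rw [Finset.mul_sum]
      have hc : ∀ k ∈ Finset.range N,
          (1 / S) * ((1 / L (k + 1)) * (f (x (k + 1)) - f xs)) =
            w k * f (x (k + 1)) - w k * f xs := fun k _ => by rw [hw]; ring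
      rw [Finset.sum_congr rfl hc, Finset.sum_sub_distrib, ← Finset.sum_mul, hwsum, one_mul]
    rw [h2]
    linarith [hjensen]
  have hfinal := hkey.trans (mul_le_mul_of_nonneg_left hsum (by positivity))
  have heq : (1 / S) * (R ^ 2 +
        (∑ k ∈ Finset.range N,
          (δ' (k + 1) + Δ (k + 1) * ‖x (k + 1) - x k‖ + γ * ‖x k - xs‖) / L (k + 1)) +
        δ * S) =
      R ^ 2 / S +
        (1 / S) * ∑ k ∈ Finset.range N,
          (δ' (k + 1) + Δ (k + 1) * ‖x (k + 1) - x k‖ + γ * ‖x k - xs‖) / L (k + 1) +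
        δ := by
    field_simp
  linarith
end

section
/- Let N ≥ 1 be a natural number, let L, δ, Δ > 0, and let (L_k)_{k=0}^{N}, (δ_k)_{k=0}^{N}, (Δ_k)_{k=0}^{N} be sequences of positive reals with initial values L₀, δ₀, Δ₀. Suppose there are natural numbers i₁, …, i_N ≥ 1 such that for each k = 1, …, N: L_k = 2^{i_k − 2} · L_{k−1}, δ_k = 2^{i_k − 2} · δ_{k−1}, and Δ_k = 2^{i_k − 2} · Δ_{k−1} (integer exponents, so i_k = 1 means halving). If at least one of the inequalities L_N ≤ 2L, δ_N ≤ 2δ, Δ_N ≤ 2Δ holds, then Σ_{k=1}^{N} i_k ≤ 2N + max{log₂(2L/L₀), log₂(2δ/δ₀), log₂(2Δ/Δ₀)}. -/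
lemma prod_rec_aux (N : ℕ) (i : ℕ → ℕ) (f : ℕ → ℝ)
    (hrec : ∀ k, 1 ≤ k → k ≤ N → f k = (2 : ℝ) ^ ((i k : ℤ) - 2) * f (k - 1)) :
    ∀ n, n ≤ N → f n = (2 : ℝ) ^ (∑ k ∈ Finset.range n, ((i (k + 1) : ℤ) - 2)) * f 0 := by
  intro n
  induction n with
  | zero => simp
  | succ m ih =>
    intro hm
    rw [hrec (m + 1) (Nat.le_add_left 1 m) hm, Nat.add_sub_cancel,
      ih (le_of_lt hm), Finset.sum_range_succ, zpow_add₀ (by norm_num : (2:ℝ) ≠ 0)]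
    ring

lemma key_aux (N : ℕ) (i : ℕ → ℕ) (f : ℕ → ℝ) (c : ℝ) (hc : 0 < c)
    (hf : ∀ k, 0 < f k)
    (hrec : ∀ k, 1 ≤ k → k ≤ N → f k = (2 : ℝ) ^ ((i k : ℤ) - 2) * f (k - 1))
    (hfin : f N ≤ 2 * c) :
    ((∑ k ∈ Finset.range N, ((i (k + 1) : ℤ) - 2) : ℤ) : ℝ) ≤
      Real.logb 2 (2 * c / f 0) := by
  set E : ℤ := ∑ k ∈ Finset.range N, ((i (k + 1) : ℤ) - 2) with hE
  have h1 : f N = (2 : ℝ) ^ E * f 0 := prod_rec_aux N i f hrec N le_rfl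
  have h2 : (2 : ℝ) ^ E ≤ 2 * c / f 0 := by
    rw [le_div_iff₀ (hf 0)]
    linarith [h1]
  have h3 := Real.logb_le_logb_of_le (b := 2) one_lt_two (zpow_pos (by norm_num) E) h2
  rwa [← Real.rpow_intCast 2 E, Real.logb_rpow (by norm_num) (by norm_num)] at h3

/-- Bound on the total number of inner solves of the auxiliary problem in the
adaptive gradient method (oracle-complexity estimate). -/
theorem inner_solves_bound
    (N : ℕ) (hN : 1 ≤ N)
    (L δ Δ : ℝ) (hL : 0 < L) (hδ : 0 < δ) (hΔ : 0 < Δ)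
    (Ls δs Δs : ℕ → ℝ)
    (hLs : ∀ k, 0 < Ls k) (hδs : ∀ k, 0 < δs k) (hΔs : ∀ k, 0 < Δs k)
    (i : ℕ → ℕ) (hi : ∀ k, 1 ≤ k → k ≤ N → 1 ≤ i k)
    (hLrec : ∀ k, 1 ≤ k → k ≤ N → Ls k = (2 : ℝ) ^ ((i k : ℤ) - 2) * Ls (k - 1))
    (hδrec : ∀ k, 1 ≤ k → k ≤ N → δs k = (2 : ℝ) ^ ((i k : ℤ) - 2) * δs (k - 1))
    (hΔrec : ∀ k, 1 ≤ k → k ≤ N → Δs k = (2 : ℝ) ^ ((i k : ℤ) - 2) * Δs (k - 1))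
    (hfinal : Ls N ≤ 2 * L ∨ δs N ≤ 2 * δ ∨ Δs N ≤ 2 * Δ) :
    (∑ k ∈ Finset.range N, (i (k + 1) : ℝ)) ≤
      2 * N + max (Real.logb 2 (2 * L / Ls 0))
        (max (Real.logb 2 (2 * δ / δs 0)) (Real.logb 2 (2 * Δ / Δs 0))) := by
  have hsum : (∑ k ∈ Finset.range N, (i (k + 1) : ℝ)) =
      2 * N + ((∑ k ∈ Finset.range N, ((i (k + 1) : ℤ) - 2) : ℤ) : ℝ) := by
    push_cast
    rw [Finset.sum_sub_distrib]
    simp [Finset.sum_const, mul_comm]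
  rw [hsum]
  have hmax : ((∑ k ∈ Finset.range N, ((i (k + 1) : ℤ) - 2) : ℤ) : ℝ) ≤
      max (Real.logb 2 (2 * L / Ls 0))
        (max (Real.logb 2 (2 * δ / δs 0)) (Real.logb 2 (2 * Δ / Δs 0))) := by
    rcases hfinal with h | h | h
    · exact le_max_of_le_left (key_aux N i Ls L hL hLs hLrec h)
    · exact le_max_of_le_right (le_max_of_le_left (key_aux N i δs δ hδ hδs hδrec h))
    · exact le_max_of_le_right (le_max_of_le_right (key_aux N i Δs Δ hΔ hΔs hΔrec h))
  linarith
end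

section
/- Let L, Δ, ε > 0, let p be a natural number with 2^p > 1 + 16Δ²/(εL), and let r > ε/(4Δ) be a real number. Then ((2^p − 1)/2)·L·r² > 2Δ·r. Consequently, for any reals a, b (interpreted as f(xᵏ⁺¹) and f(xᵏ) + ⟨∇̃f(xᵏ), xᵏ⁺¹ − xᵏ⟩), if a ≤ b + (L/2)r² + Δ·r, then a ≤ b + 2^{p−1}·L·r². -/
/-- Key step in the analysis of the modified adaptive gradient method for
nonsmooth convex problems: after `p` doublings of the Lipschitz parameter,
the nonsmoothness term is dominated by the quadratic one. -/
theorem doubling_dominates_nonsmooth_term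
    (L Δ ε : ℝ) (hL : 0 < L) (hΔ : 0 < Δ) (hε : 0 < ε)
    (p : ℕ) (hp : (2 : ℝ) ^ p > 1 + 16 * Δ ^ 2 / (ε * L))
    (r : ℝ) (hr : r > ε / (4 * Δ)) :
    ((2 : ℝ) ^ p - 1) / 2 * L * r ^ 2 > 2 * Δ * r ∧
      ∀ a b : ℝ, a ≤ b + L / 2 * r ^ 2 + Δ * r →
        a ≤ b + (2 : ℝ) ^ (p - 1) * L * r ^ 2 := by
  have hr0 : 0 < r := lt_trans (div_pos hε (by linarith)) hr
  have hr' : ε < r * (4 * Δ) := (div_lt_iff₀ (by linarith)).mp hr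
  have hεL : 0 < ε * L := mul_pos hε hL
  have hp' : 16 * Δ ^ 2 < ((2 : ℝ) ^ p - 1) * (ε * L) := by
    have := (div_lt_iff₀ hεL).mp (by linarith : 16 * Δ ^ 2 / (ε * L) < (2 : ℝ) ^ p - 1)
    linarith
  have key : ((2 : ℝ) ^ p - 1) / 2 * L * r ^ 2 > 2 * Δ * r := by
    nlinarith [mul_pos hr0 hr0, mul_pos hΔ hr0, sq_nonneg (r * (4 * Δ) - ε),
      mul_pos (mul_pos hr0 hr0) hL, mul_pos hε hr0,
      mul_lt_mul_of_pos_right hp' (mul_pos hr0 hr0),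
      mul_lt_mul_of_pos_right hr' (mul_pos hΔ hr0)]
  refine ⟨key, fun a b hab => ?_⟩
  have hp1 : 1 ≤ p := by
    by_contra h
    push_neg at h
    interval_cases p
    simp at hp
    nlinarith [div_pos (by positivity : (0:ℝ) < 16 * Δ ^ 2) hεL]
  have hpow : (2 : ℝ) ^ (p - 1) * 2 = 2 ^ p := by
    rw [← pow_succ, Nat.sub_add_cancel hp1]
  have h2 : (2 : ℝ) ^ (p - 1) * L * r ^ 2 = (2 : ℝ) ^ p / 2 * L * r ^ 2 := by
    rw [← hpow]; ring
  nlinarith [key, mul_pos hΔ hr0]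
end

section
/- Let ε, L, R, Δ > 0, let p, N be natural numbers, and let F, S be real numbers with S > 0. Assume: (i) 2^p ≤ 2·(1 + 16Δ²/(εL)); (ii) S ≥ N/(2^{p+1}L); (iii) F ≤ R²/S + ε/2; and (iv) N ≥ 8LR²/ε + 128Δ²R²/ε². Then F ≤ ε. -/
/-!
Condition (i) caps the adaptive parameter: `2^(p+1) L ≤ 4L + 64Δ²/ε`. So, by (ii) and (iv),
`S ≥ N / (4L + 64Δ²/ε) ≥ 2R²/ε`, and the term `R²/S` in (iii) is at most `ε/2`.
-/

lemma two_pow_succ_mul_le_of_two_pow_le {ε L Δ : ℝ} (hε : 0 < ε) (hL : 0 < L) {p : ℕ}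
    (hp : (2 : ℝ) ^ p ≤ 2 * (1 + 16 * Δ ^ 2 / (ε * L))) :
    (2 : ℝ) ^ (p + 1) * L ≤ 4 * L + 64 * Δ ^ 2 / ε :=
  calc (2 : ℝ) ^ (p + 1) * L = 2 * L * 2 ^ p := by ring
    _ ≤ 2 * L * (2 * (1 + 16 * Δ ^ 2 / (ε * L))) := by gcongr
    _ = 4 * L + 64 * Δ ^ 2 / ε := by field_simp; ring

lemma le_of_div_le_of_mul_le {B S N M A : ℝ} (hM : 0 < M) (hMA : M ≤ A) (hN : 0 ≤ N)
    (hSN : N / M ≤ S) (hBN : B * A ≤ N) : B ≤ S :=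
  calc B ≤ N / A := (le_div_iff₀ (hM.trans_le hMA)).2 hBN
    _ ≤ N / M := div_le_div_of_nonneg_left hN hM hMA
    _ ≤ S := hSN

lemma sq_div_le_half_of_le {ε R S : ℝ} (hε : 0 < ε) (hS : 0 < S) (hRS : 2 * R ^ 2 / ε ≤ S) :
    R ^ 2 / S ≤ ε / 2 := by
  rw [div_le_iff₀ hS]
  rw [div_le_iff₀ hε] at hRS
  nlinarith

theorem nonsmooth_complexity_count_general
    (ε L R Δ : ℝ) (hε : 0 < ε) (hL : 0 < L)
    (p N : ℕ) (F S : ℝ) (hS : 0 < S)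
    (hp : (2 : ℝ) ^ p ≤ 2 * (1 + 16 * Δ ^ 2 / (ε * L)))
    (hSN : S ≥ (N : ℝ) / ((2 : ℝ) ^ (p + 1) * L))
    (hF : F ≤ R ^ 2 / S + ε / 2)
    (hN : (N : ℝ) ≥ 8 * L * R ^ 2 / ε + 128 * Δ ^ 2 * R ^ 2 / ε ^ 2) :
    F ≤ ε := by
  have hNA : 2 * R ^ 2 / ε * (4 * L + 64 * Δ ^ 2 / ε) ≤ N := by
    convert hN.le using 1
    field_simp
    ring
  have hRS : 2 * R ^ 2 / ε ≤ S :=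
    le_of_div_le_of_mul_le (by positivity) (two_pow_succ_mul_le_of_two_pow_le hε hL hp)
      (Nat.cast_nonneg N) hSN hNA
  linarith [sq_div_le_half_of_le hε hS hRS]

/-- Complexity count for the modified adaptive gradient method for nonsmooth
convex problems: `O(LR²/ε + Δ²R²/ε²)` iterations guarantee accuracy `ε`. -/
theorem nonsmooth_complexity_count
    (ε L R Δ : ℝ) (hε : 0 < ε) (hL : 0 < L) (hR : 0 < R) (hΔ : 0 < Δ)
    (p N : ℕ) (F S : ℝ) (hS : 0 < S)
    (hp : (2 : ℝ) ^ p ≤ 2 * (1 + 16 * Δ ^ 2 / (ε * L)))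
    (hSN : S ≥ (N : ℝ) / ((2 : ℝ) ^ (p + 1) * L))
    (hF : F ≤ R ^ 2 / S + ε / 2)
    (hN : (N : ℝ) ≥ 8 * L * R ^ 2 / ε + 128 * Δ ^ 2 * R ^ 2 / ε ^ 2) :
    F ≤ ε :=
  nonsmooth_complexity_count_general ε L R Δ hε hL p N F S hS hp hSN hF hN
end

section
/- Let E be a real inner product space, f : E → ℝ, x ∈ E, v ∈ E with v ≠ 0, and constants L > 0 and 0 ≤ Δ' ≤ ‖v‖. Set h = 1/L − Δ'/(L‖v‖) and x⁺ = x − h·v. If f(x⁺) ≤ f(x) + ⟨v, x⁺ − x⟩ + (L/2)‖x⁺ − x‖² + Δ'‖x⁺ − x‖, then f(x⁺) − f(x) ≤ −(1/(2L))(‖v‖ − Δ')². -/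
open scoped RealInnerProductSpace

/-- Per-step descent estimate of the adaptive gradient method with an inexact
gradient `v` and adaptive error estimate `Δ'`. -/
theorem inexact_gradient_step_descent
    {E : Type*} [NormedAddCommGroup E] [InnerProductSpace ℝ E]
    (f : E → ℝ) (x v : E) (hv : v ≠ 0)
    (L Δ' : ℝ) (hL : 0 < L) (hΔ'0 : 0 ≤ Δ') (hΔ' : Δ' ≤ ‖v‖)
    (h : ℝ) (hh : h = 1 / L - Δ' / (L * ‖v‖))
    (xp : E) (hxp : xp = x - h • v)
    (hexit : f xp ≤ f x + ⟪v, xp - x⟫ + L / 2 * ‖xp - x‖ ^ 2 + Δ' * ‖xp - x‖) :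
    f xp - f x ≤ -(1 / (2 * L)) * (‖v‖ - Δ') ^ 2 := by
  have hvn : (0:ℝ) < ‖v‖ := norm_pos_iff.mpr hv
  have hheq : h = (‖v‖ - Δ') / (L * ‖v‖) := by
    rw [hh]; field_simp
  have hh0 : 0 ≤ h := by
    rw [hheq]
    exact div_nonneg (sub_nonneg.2 hΔ') (by positivity)
  have hd : xp - x = -(h • v) := by rw [hxp]; abel
  have hinner : ⟪v, xp - x⟫ = -(h * ‖v‖ ^ 2) := by
    rw [hd, inner_neg_right, real_inner_smul_right, real_inner_self_eq_norm_sq]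
  have hnorm : ‖xp - x‖ = h * ‖v‖ := by
    rw [hd, norm_neg, norm_smul, Real.norm_of_nonneg hh0]
  rw [hinner, hnorm] at hexit
  have key : -(h * ‖v‖ ^ 2) + L / 2 * (h * ‖v‖) ^ 2 + Δ' * (h * ‖v‖)
      = -(1 / (2 * L)) * (‖v‖ - Δ') ^ 2 := by
    rw [hheq]; field_simp; ring
  linarith [hexit]
end

section
/- Let E be a real inner product space and f : E → ℝ a differentiable function attaining its minimum value f* and satisfying the Polyak–Łojasiewicz condition with constant μ > 0: f(x) − f* ≤ (1/(2μ))‖∇f(x)‖² for all x. Let x ∈ E, v ∈ E with v ≠ 0, Δ ≥ 0 with ‖v − ∇f(x)‖ ≤ Δ, and constants L > 0 and 0 ≤ Δ' ≤ ‖v‖. Set h = 1/L − Δ'/(L‖v‖), x⁺ = x − h·v, and assume f(x⁺) ≤ f(x) + ⟨v, x⁺ − x⟩ + (L/2)‖x⁺ − x‖² + Δ'‖x⁺ − x‖. Then f(x⁺) − f* ≤ (1 − (μ/L)·((‖v‖ − Δ')/(‖v‖ + Δ))²)·(f(x) − f*). -/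
open scoped RealInnerProductSpace

/-- One step of the adaptive gradient method with inexact gradient under the
Polyak–Łojasiewicz condition: contraction of the objective residual. -/
theorem inexact_gradient_step_PL_contraction
    {E : Type*} [NormedAddCommGroup E] [InnerProductSpace ℝ E] [CompleteSpace E]
    (f : E → ℝ) (f' : E → E) (hdiff : ∀ x, HasGradientAt f (f' x) x)
    (μ : ℝ) (hμ : 0 < μ)
    (fstar : ℝ) (hmin : ∃ xs, f xs = fstar) (hlb : ∀ x, fstar ≤ f x)
    (hPL : ∀ x, f x - fstar ≤ 1 / (2 * μ) * ‖f' x‖ ^ 2)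
    (x v : E) (hv : v ≠ 0)
    (Δ : ℝ) (hΔ : 0 ≤ Δ) (hvΔ : ‖v - f' x‖ ≤ Δ)
    (L Δ' : ℝ) (hL : 0 < L) (hΔ'0 : 0 ≤ Δ') (hΔ' : Δ' ≤ ‖v‖)
    (h : ℝ) (hh : h = 1 / L - Δ' / (L * ‖v‖))
    (xp : E) (hxp : xp = x - h • v)
    (hexit : f xp ≤ f x + ⟪v, xp - x⟫ + L / 2 * ‖xp - x‖ ^ 2 + Δ' * ‖xp - x‖) :
    f xp - fstar ≤
      (1 - μ / L * ((‖v‖ - Δ') / (‖v‖ + Δ)) ^ 2) * (f x - fstar) := by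
  set a := ‖v‖ with ha_def
  have ha : 0 < a := norm_pos_iff.mpr hv
  -- gradient norm bound
  have hgrad : ‖f' x‖ ≤ a + Δ := by
    have h1 : f' x = v - (v - f' x) := by abel
    calc ‖f' x‖ = ‖v - (v - f' x)‖ := by rw [← h1]
      _ ≤ ‖v‖ + ‖v - f' x‖ := norm_sub_le _ _
      _ ≤ a + Δ := by linarith
  have hxpx : xp - x = -(h • v) := by rw [hxp, sub_sub_cancel_left]
  have hh0 : 0 ≤ h := by
    rw [hh]
    have : Δ' / (L * a) ≤ 1 / L := by
      rw [div_le_div_iff₀ (by positivity) hL]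
      nlinarith
    linarith
  have hnorm : ‖xp - x‖ = h * a := by
    rw [hxpx, norm_neg, norm_smul, Real.norm_of_nonneg hh0]
  have hinner : ⟪v, xp - x⟫ = -(h * a ^ 2) := by
    rw [hxpx, inner_neg_right, real_inner_smul_right, real_inner_self_eq_norm_sq]
  have hha : h * a = (a - Δ') / L := by
    rw [hh]; field_simp
  have descent : f xp ≤ f x - (a - Δ') ^ 2 / (2 * L) := by
    rw [hinner, hnorm] at hexit
    have e1 : h * a ^ 2 = (h * a) * a := by ring
    rw [e1, hha] at hexit
    have : f x + -((a - Δ') / L * a) + L / 2 * ((a - Δ') / L) ^ 2 + Δ' * ((a - Δ') / L)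
        = f x - (a - Δ') ^ 2 / (2 * L) := by
      field_simp; ring
    linarith [hexit, this.symm.le]
  have hPLx := hPL x
  have hD : f x - fstar ≤ (a + Δ) ^ 2 / (2 * μ) := by
    have h2 : ‖f' x‖ ^ 2 ≤ (a + Δ) ^ 2 := by nlinarith [norm_nonneg (f' x)]
    have h3 : 1 / (2 * μ) * ‖f' x‖ ^ 2 ≤ 1 / (2 * μ) * (a + Δ) ^ 2 :=
      mul_le_mul_of_nonneg_left h2 (by positivity)
    have h4 : 1 / (2 * μ) * (a + Δ) ^ 2 = (a + Δ) ^ 2 / (2 * μ) := by ring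
    linarith
  -- key bound: μ/L * ((a-Δ')/(a+Δ))^2 * (f x - fstar) ≤ (a-Δ')^2/(2L)
  have haΔ : 0 < a + Δ := by linarith
  have key : μ / L * ((a - Δ') / (a + Δ)) ^ 2 * (f x - fstar) ≤ (a - Δ') ^ 2 / (2 * L) := by
    have hc : 0 ≤ μ / L * ((a - Δ') / (a + Δ)) ^ 2 := by positivity
    calc μ / L * ((a - Δ') / (a + Δ)) ^ 2 * (f x - fstar)
        ≤ μ / L * ((a - Δ') / (a + Δ)) ^ 2 * ((a + Δ) ^ 2 / (2 * μ)) := by nlinarith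
      _ = (a - Δ') ^ 2 / (2 * L) := by field_simp
  have expand : (1 - μ / L * ((a - Δ') / (a + Δ)) ^ 2) * (f x - fstar)
      = (f x - fstar) - μ / L * ((a - Δ') / (a + Δ)) ^ 2 * (f x - fstar) := by ring
  linarith
end

section
/- Let E be a real inner product space and f : E → ℝ a differentiable function attaining its minimum value f* and satisfying the Polyak–Łojasiewicz condition with constant μ > 0: f(x) − f* ≤ (1/(2μ))‖∇f(x)‖² for all x. Let Δ ≥ 0, and let sequences (x^k)_{k≥0} in E, inexact gradients (v_k) with v_k ≠ 0 and ‖v_k − ∇f(x^k)‖ ≤ Δ, adaptive parameters L_{k+1} ≥ μ and 0 ≤ Δ_{k+1} ≤ ‖v_k‖ be given, with x^{k+1} = x^k − h_k v_k where h_k = 1/L_{k+1} − Δ_{k+1}/(L_{k+1}‖v_k‖), and suppose the exit criterion f(x^{k+1}) ≤ f(x^k) + ⟨v_k, x^{k+1} − x^k⟩ + (L_{k+1}/2)‖x^{k+1} − x^k‖² + Δ_{k+1}‖x^{k+1} − x^k‖ holds for every k. Then for every k: f(x^{k+1}) − f* ≤ Π_{i=0}^{k} (1 − (μ/L_{i+1})·((‖v_i‖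 − Δ_{i+1})/(‖v_i‖ + Δ))²) · (f(x⁰) − f*). -/
open scoped RealInnerProductSpace

/-- Convergence estimate of the adaptive gradient method (Algorithm 2) with
inexact gradients under the Polyak–Łojasiewicz condition. -/
theorem adaptive_gradient_PL_convergence
    {E : Type*} [NormedAddCommGroup E] [InnerProductSpace ℝ E] [CompleteSpace E]
    (f : E → ℝ) (f' : E → E) (hdiff : ∀ x, HasGradientAt f (f' x) x)
    (μ : ℝ) (hμ : 0 < μ)
    (fstar : ℝ) (hmin : ∃ xs, f xs = fstar) (hlb : ∀ x, fstar ≤ f x)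
    (hPL : ∀ x, f x - fstar ≤ 1 / (2 * μ) * ‖f' x‖ ^ 2)
    (Δ : ℝ) (hΔ : 0 ≤ Δ)
    (x : ℕ → E) (v : ℕ → E) (hv : ∀ k, v k ≠ 0)
    (hvΔ : ∀ k, ‖v k - f' (x k)‖ ≤ Δ)
    (L : ℕ → ℝ) (hL : ∀ k, μ ≤ L (k + 1))
    (Δ' : ℕ → ℝ) (hΔ'0 : ∀ k, 0 ≤ Δ' (k + 1)) (hΔ' : ∀ k, Δ' (k + 1) ≤ ‖v k‖)
    (h : ℕ → ℝ) (hh : ∀ k, h k = 1 / L (k + 1) - Δ' (k + 1) / (L (k + 1) * ‖v k‖))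
    (hstep : ∀ k, x (k + 1) = x k - h k • v k)
    (hexit : ∀ k, f (x (k + 1)) ≤
      f (x k) + ⟪v k, x (k + 1) - x k⟫ + L (k + 1) / 2 * ‖x (k + 1) - x k‖ ^ 2 +
        Δ' (k + 1) * ‖x (k + 1) - x k‖) :
    ∀ k : ℕ,
      f (x (k + 1)) - fstar ≤
        (∏ i ∈ Finset.range (k + 1),
            (1 - μ / L (i + 1) * ((‖v i‖ - Δ' (i + 1)) / (‖v i‖ + Δ)) ^ 2)) *
          (f (x 0) - fstar) := by
  -- Factor nonnegativity
  have hfac : ∀ k : ℕ,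
      0 ≤ 1 - μ / L (k + 1) * ((‖v k‖ - Δ' (k + 1)) / (‖v k‖ + Δ)) ^ 2 := by
    intro k
    have hnv : 0 < ‖v k‖ := norm_pos_iff.mpr (hv k)
    have hLpos : 0 < L (k + 1) := lt_of_lt_of_le hμ (hL k)
    have h1 : μ / L (k + 1) ≤ 1 := (div_le_one hLpos).mpr (hL k)
    have h2 : ((‖v k‖ - Δ' (k + 1)) / (‖v k‖ + Δ)) ^ 2 ≤ 1 := by
      have hq : |(‖v k‖ - Δ' (k + 1)) / (‖v k‖ + Δ)| ≤ 1 := by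
        rw [abs_div]
        rw [div_le_one (by positivity : (0:ℝ) < |‖v k‖ + Δ|)]
        rw [abs_of_nonneg (by linarith [hΔ' k] : (0:ℝ) ≤ ‖v k‖ - Δ' (k + 1)),
          abs_of_nonneg (by linarith : (0:ℝ) ≤ ‖v k‖ + Δ)]
        linarith [hΔ'0 k]
      calc ((‖v k‖ - Δ' (k + 1)) / (‖v k‖ + Δ)) ^ 2
          = |(‖v k‖ - Δ' (k + 1)) / (‖v k‖ + Δ)| ^ 2 := (sq_abs _).symm
        _ ≤ 1 ^ 2 := by exact pow_le_pow_left₀ (abs_nonneg _) hq 2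
        _ = 1 := one_pow 2
    nlinarith [sq_nonneg ((‖v k‖ - Δ' (k + 1)) / (‖v k‖ + Δ)),
      div_nonneg hμ.le hLpos.le]
  -- One-step estimate
  have hone : ∀ k : ℕ,
      f (x (k + 1)) - fstar ≤
        (1 - μ / L (k + 1) * ((‖v k‖ - Δ' (k + 1)) / (‖v k‖ + Δ)) ^ 2) *
          (f (x k) - fstar) := by
    intro k
    set nv := ‖v k‖ with hnvdef
    have hnv : 0 < nv := norm_pos_iff.mpr (hv k)
    have hLpos : 0 < L (k + 1) := lt_of_lt_of_le hμ (hL k)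
    set A := nv - Δ' (k + 1) with hAdef
    have hA : 0 ≤ A := by simp only [hAdef]; linarith [hΔ' k]
    have hheq : h k = A / (L (k + 1) * nv) := by
      rw [hh k]; field_simp
      rw [hAdef, hnvdef, sub_mul, one_mul, div_mul_cancel₀ _ (norm_ne_zero_iff.mpr (hv k))]
    have hhpos : 0 ≤ h k := by rw [hheq]; positivity
    have hxd : x (k + 1) - x k = -(h k • v k) := by rw [hstep k]; abel
    have hinner : ⟪v k, x (k + 1) - x k⟫ = -(h k * nv ^ 2) := by
      rw [hxd, inner_neg_right, real_inner_smul_right,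
        real_inner_self_eq_norm_sq]
    have hnorm : ‖x (k + 1) - x k‖ = h k * nv := by
      rw [hxd, norm_neg, norm_smul, Real.norm_eq_abs, abs_of_nonneg hhpos]
    have hexk := hexit k
    rw [hinner, hnorm] at hexk
    have hhnv : h k * nv = A / L (k + 1) := by
      rw [hheq]; field_simp
    -- descent: f(x(k+1)) ≤ f(x k) - A^2/(2 L)
    have hdesc : f (x (k + 1)) ≤ f (x k) - A ^ 2 / (2 * L (k + 1)) := by
      have e1 : h k * nv ^ 2 = A / L (k + 1) * nv := by
        rw [pow_two, ← mul_assoc, hhnv]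
      have e2 : (h k * nv) ^ 2 = (A / L (k + 1)) ^ 2 := by rw [hhnv]
      rw [e1, e2, hhnv] at hexk
      have : f (x k) + -(A / L (k + 1) * nv) +
          L (k + 1) / 2 * (A / L (k + 1)) ^ 2 +
          Δ' (k + 1) * (A / L (k + 1)) = f (x k) - A ^ 2 / (2 * L (k + 1)) := by
        have : Δ' (k + 1) = nv - A := by simp [hAdef]
        rw [this]; field_simp; ring
      linarith [hexk, this.symm.le]
    -- PL bound with inexactness
    have hgrad : ‖f' (x k)‖ ≤ nv + Δ := by
      calc ‖f' (x k)‖ = ‖v k - (v k - f' (x k))‖ := by congr 1; abel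
        _ ≤ ‖v k‖ + ‖v k - f' (x k)‖ := norm_sub_le _ _
        _ ≤ nv + Δ := by exact add_le_add le_rfl (hvΔ k)
    have hPLk : f (x k) - fstar ≤ (nv + Δ) ^ 2 / (2 * μ) := by
      have := hPL (x k)
      have h2 : ‖f' (x k)‖ ^ 2 ≤ (nv + Δ) ^ 2 :=
        pow_le_pow_left₀ (norm_nonneg _) hgrad 2
      calc f (x k) - fstar ≤ 1 / (2 * μ) * ‖f' (x k)‖ ^ 2 := this
        _ ≤ 1 / (2 * μ) * (nv + Δ) ^ 2 := by
            apply mul_le_mul_of_nonneg_left h2; positivity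
        _ = (nv + Δ) ^ 2 / (2 * μ) := by ring
    -- combine
    have hkey : μ / L (k + 1) * (A / (nv + Δ)) ^ 2 * (f (x k) - fstar)
        ≤ A ^ 2 / (2 * L (k + 1)) := by
      have hnd : 0 < nv + Δ := by linarith
      have hc : 0 ≤ μ / L (k + 1) * (A / (nv + Δ)) ^ 2 := by positivity
      calc μ / L (k + 1) * (A / (nv + Δ)) ^ 2 * (f (x k) - fstar)
          ≤ μ / L (k + 1) * (A / (nv + Δ)) ^ 2 * ((nv + Δ) ^ 2 / (2 * μ)) :=
            mul_le_mul_of_nonneg_left hPLk hc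
        _ = A ^ 2 / (2 * L (k + 1)) := by field_simp
    nlinarith [hdesc, hkey]
  intro k
  induction k with
  | zero =>
      simpa using hone 0
  | succ n ih =>
      have hstep' := hone (n + 1)
      have hfacprod : 0 ≤ ∏ i ∈ Finset.range (n + 1),
          (1 - μ / L (i + 1) * ((‖v i‖ - Δ' (i + 1)) / (‖v i‖ + Δ)) ^ 2) :=
        Finset.prod_nonneg fun i _ => hfac i
      calc f (x (n + 2)) - fstar
          ≤ (1 - μ / L (n + 2) * ((‖v (n + 1)‖ - Δ' (n + 2)) / (‖v (n + 1)‖ + Δ)) ^ 2) *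
              (f (x (n + 1)) - fstar) := hstep'
        _ ≤ (1 - μ / L (n + 2) * ((‖v (n + 1)‖ - Δ' (n + 2)) / (‖v (n + 1)‖ + Δ)) ^ 2) *
              ((∏ i ∈ Finset.range (n + 1),
                (1 - μ / L (i + 1) * ((‖v i‖ - Δ' (i + 1)) / (‖v i‖ + Δ)) ^ 2)) *
                (f (x 0) - fstar)) :=
            mul_le_mul_of_nonneg_left ih (hfac (n + 1))
        _ = (∏ i ∈ Finset.range (n + 2),
              (1 - μ / L (i + 1) * ((‖v i‖ - Δ' (i + 1)) / (‖v i‖ + Δ)) ^ 2)) *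
                (f (x 0) - fstar) := by
            conv_rhs => rw [Finset.prod_range_succ]
            ring
end

section
/- Let E be a real inner product space and f : E → ℝ a differentiable function attaining its minimum value f* and satisfying the Polyak–Łojasiewicz condition with constant μ > 0: f(x) − f* ≤ (1/(2μ))‖∇f(x)‖² for all x. Let L ≥ μ, Δ > 0, and let sequences (x^i)_{i=0}^{k+1} in E, (v_i) with ‖v_i − ∇f(x^i)‖ ≤ Δ, and 0 ≤ Δ_{i+1} ≤ Δ be given such that for each i = 0, …, k: f(x^{i+1}) − f* ≤ (1 − (μ/L)·((‖v_i‖ − Δ_{i+1})/(‖v_i‖ + Δ))²)·(f(x^i) − f*). Then for every real C > 1, at least one of the following two inequalities holds: (a) f(x^{k+1}) − f* ≤ (1 − (μ/L)·((C − 1)/(C + 1))²)^{k+1}·(f(x⁰) − f*); or (b) min_{1 ≤ i ≤ k+1} f(x^i) − f* < (C + 1)²Δ²/(2μ). -/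
open scoped RealInnerProductSpace

set_option maxHeartbeats 1000000 in
/-- Dichotomy for the adaptive gradient method under the Polyak–Łojasiewicz
condition: either linear convergence or accuracy at the noise level. -/
theorem adaptive_gradient_PL_dichotomy
    {E : Type*} [NormedAddCommGroup E] [InnerProductSpace ℝ E] [CompleteSpace E]
    (f : E → ℝ) (f' : E → E) (hdiff : ∀ x, HasGradientAt f (f' x) x)
    (μ : ℝ) (hμ : 0 < μ)
    (fstar : ℝ) (hmin : ∃ xs, f xs = fstar) (hlb : ∀ x, fstar ≤ f x)
    (hPL : ∀ x, f x - fstar ≤ 1 / (2 * μ) * ‖f' x‖ ^ 2)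
    (L Δ : ℝ) (hμL : μ ≤ L) (hΔ : 0 < Δ)
    (k : ℕ) (x : ℕ → E) (v : ℕ → E)
    (hvΔ : ∀ i ≤ k, ‖v i - f' (x i)‖ ≤ Δ)
    (Δ' : ℕ → ℝ) (hΔ'0 : ∀ i ≤ k, 0 ≤ Δ' (i + 1)) (hΔ'Δ : ∀ i ≤ k, Δ' (i + 1) ≤ Δ)
    (hrec : ∀ i ≤ k,
      f (x (i + 1)) - fstar ≤
        (1 - μ / L * ((‖v i‖ - Δ' (i + 1)) / (‖v i‖ + Δ)) ^ 2) * (f (x i) - fstar)) :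
    ∀ C : ℝ, 1 < C →
      f (x (k + 1)) - fstar ≤
          (1 - μ / L * ((C - 1) / (C + 1)) ^ 2) ^ (k + 1) * (f (x 0) - fstar) ∨
      ∃ i, 1 ≤ i ∧ i ≤ k + 1 ∧ f (x i) - fstar < (C + 1) ^ 2 * Δ ^ 2 / (2 * μ) := by
  intro C hC
  by_cases hb : ∃ i, 1 ≤ i ∧ i ≤ k + 1 ∧ f (x i) - fstar < (C + 1) ^ 2 * Δ ^ 2 / (2 * μ)
  · exact Or.inr hb
  left
  push_neg at hb
  set thr := (C + 1) ^ 2 * Δ ^ 2 / (2 * μ) with hthr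
  set q := 1 - μ / L * ((C - 1) / (C + 1)) ^ 2 with hq
  have hL : 0 < L := lt_of_lt_of_le hμ hμL
  have hμL' : 0 < μ / L := div_pos hμ hL
  have hμL1 : μ / L ≤ 1 := (div_le_one hL).mpr hμL
  have hC1 : (0:ℝ) < C + 1 := by linarith
  have hs0 : 0 ≤ (C - 1) / (C + 1) := div_nonneg (by linarith) hC1.le
  have hs1 : (C - 1) / (C + 1) < 1 := (div_lt_one hC1).mpr (by linarith)
  have hss : ((C - 1) / (C + 1)) ^ 2 < 1 := by nlinarith [hs0, hs1]
  have hq0 : 0 < q := by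
    have h1 : μ / L * ((C - 1) / (C + 1)) ^ 2 < 1 := by
      nlinarith [mul_nonneg (by linarith : (0:ℝ) ≤ 1 - μ / L) (sq_nonneg ((C - 1) / (C + 1)))]
    rw [hq]; linarith
  have hnn : ∀ j, 0 ≤ f (x j) - fstar := fun j => by linarith [hlb (x j)]
  -- the initial point also has large gap
  have h0 : thr ≤ f (x 0) - fstar := by
    by_contra h
    push_neg at h
    have h1 := hrec 0 (Nat.zero_le k)
    have hge := hb 1 le_rfl (by omega)
    nlinarith [hnn 0, mul_nonneg (mul_nonneg hμL'.le
      (sq_nonneg ((‖v 0‖ - Δ' 1) / (‖v 0‖ + Δ)))) (hnn 0)]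
  -- key contraction step
  have key : ∀ i ≤ k, thr ≤ f (x i) - fstar →
      f (x (i + 1)) - fstar ≤ q * (f (x i) - fstar) := by
    intro i hi hthri
    have hPLi := hPL (x i)
    have h2 : (C + 1) ^ 2 * Δ ^ 2 ≤ ‖f' (x i)‖ ^ 2 := by
      have h3 := hthri.trans hPLi
      rw [hthr, div_le_iff₀ (by positivity : (0:ℝ) < 2 * μ)] at h3
      calc (C + 1) ^ 2 * Δ ^ 2 ≤ 1 / (2 * μ) * ‖f' (x i)‖ ^ 2 * (2 * μ) := h3
        _ = ‖f' (x i)‖ ^ 2 := by field_simp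
    have hgrad : (C + 1) * Δ ≤ ‖f' (x i)‖ := by
      nlinarith [norm_nonneg (f' (x i)), mul_pos hC1 hΔ]
    have htri : ‖f' (x i)‖ - ‖v i‖ ≤ Δ := by
      have h4 := norm_sub_norm_le (f' (x i)) (v i)
      have h5 := hvΔ i hi
      rw [norm_sub_rev] at h5
      linarith
    have hv : C * Δ ≤ ‖v i‖ := by nlinarith [hgrad, htri]
    have hden : 0 < ‖v i‖ + Δ := by
      have := norm_nonneg (v i); linarith
    have hr : (C - 1) / (C + 1) ≤ (‖v i‖ - Δ' (i + 1)) / (‖v i‖ + Δ) := by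
      rw [div_le_div_iff₀ hC1 hden]
      nlinarith [hv, mul_nonneg (by linarith : (0:ℝ) ≤ C + 1)
        (by linarith [hΔ'Δ i hi] : (0:ℝ) ≤ Δ - Δ' (i + 1))]
    have hr2 : ((C - 1) / (C + 1)) ^ 2 ≤ ((‖v i‖ - Δ' (i + 1)) / (‖v i‖ + Δ)) ^ 2 := pow_le_pow_left₀ hs0 hr 2
    have hfac : 1 - μ / L * ((‖v i‖ - Δ' (i + 1)) / (‖v i‖ + Δ)) ^ 2 ≤ q := by
      have := mul_le_mul_of_nonneg_left hr2 hμL'.le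
      rw [hq]; linarith
    calc f (x (i + 1)) - fstar
        ≤ (1 - μ / L * ((‖v i‖ - Δ' (i + 1)) / (‖v i‖ + Δ)) ^ 2) * (f (x i) - fstar) :=
          hrec i hi
      _ ≤ q * (f (x i) - fstar) := mul_le_mul_of_nonneg_right hfac (hnn i)
  have main : ∀ j, j ≤ k + 1 → f (x j) - fstar ≤ q ^ j * (f (x 0) - fstar) := by
    intro j
    induction j with
    | zero => intro _; simp
    | succ n ih =>
      intro hn
      have hnk : n ≤ k := by omega
      have hthn : thr ≤ f (x n) - fstar := by
        rcases Nat.eq_zero_or_pos n with h | h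
        · subst h; exact h0
        · exact hb n h (by omega)
      calc f (x (n + 1)) - fstar ≤ q * (f (x n) - fstar) := key n hnk hthn
        _ ≤ q * (q ^ n * (f (x 0) - fstar)) :=
            mul_le_mul_of_nonneg_left (ih (by omega)) hq0.le
        _ = q ^ (n + 1) * (f (x 0) - fstar) := by ring
  exact main (k + 1) le_rfl
end

section
/- Let E be a real inner product space and f : E → ℝ a differentiable function attaining its minimum value f* and satisfying the Polyak–Łojasiewicz condition with constant μ > 0: f(x) − f* ≤ (1/(2μ))‖∇f(x)‖² for all x. Let δ ≥ 0 and f_δ : E → ℝ with f_δ(x) ≤ f(x) ≤ f_δ(x) + δ for all x. Let x ∈ E, v ∈ E with v ≠ 0, Δ ≥ 0 with ‖v − ∇f(x)‖ ≤ Δ, constants L' > 0, 0 ≤ Δ' ≤ ‖v‖, δ' ≥ 0, step h = 1/L' − Δ'/(L'‖v‖), and x⁺ = x − h·v. If f_δ(x⁺) ≤ f_δ(x) + ⟨v, x⁺ − x⟩ + (L'/2)‖x⁺ − x‖² + Δ'‖x⁺ − x‖ + δ', then f(x⁺) − f* ≤ (1 − (μ/L')·((‖v‖ − Δ')/(‖v‖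 + Δ))²)·(f(x) − f*) + δ' + δ. -/
open scoped RealInnerProductSpace

/-- One step of the adaptive gradient method with inexact gradient and
inexact objective values under the Polyak–Łojasiewicz condition. -/
theorem inexact_gradient_step_PL_contraction_inexact_values
    {E : Type*} [NormedAddCommGroup E] [InnerProductSpace ℝ E] [CompleteSpace E]
    (f : E → ℝ) (f' : E → E) (hdiff : ∀ x, HasGradientAt f (f' x) x)
    (μ : ℝ) (hμ : 0 < μ)
    (fstar : ℝ) (hmin : ∃ xs, f xs = fstar) (hlb : ∀ x, fstar ≤ f x)
    (hPL : ∀ x, f x - fstar ≤ 1 / (2 * μ) * ‖f' x‖ ^ 2)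
    (δ : ℝ) (hδ : 0 ≤ δ) (fδ : E → ℝ) (hfδ : ∀ x, fδ x ≤ f x ∧ f x ≤ fδ x + δ)
    (x v : E) (hv : v ≠ 0)
    (Δ : ℝ) (hΔ : 0 ≤ Δ) (hvΔ : ‖v - f' x‖ ≤ Δ)
    (L' Δ' δ' : ℝ) (hL' : 0 < L') (hΔ'0 : 0 ≤ Δ') (hΔ' : Δ' ≤ ‖v‖) (hδ' : 0 ≤ δ')
    (h : ℝ) (hh : h = 1 / L' - Δ' / (L' * ‖v‖))
    (xp : E) (hxp : xp = x - h • v)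
    (hexit : fδ xp ≤
      fδ x + ⟪v, xp - x⟫ + L' / 2 * ‖xp - x‖ ^ 2 + Δ' * ‖xp - x‖ + δ') :
    f xp - fstar ≤
      (1 - μ / L' * ((‖v‖ - Δ') / (‖v‖ + Δ)) ^ 2) * (f x - fstar) + δ' + δ := by
  have hs : 0 < ‖v‖ := norm_pos_iff.mpr hv
  have hsne : ‖v‖ ≠ 0 := ne_of_gt hs
  have hL'ne : L' ≠ 0 := ne_of_gt hL'
  have hh' : h = (‖v‖ - Δ') / (L' * ‖v‖) := by
    rw [hh]; field_simp
  have hh0 : 0 ≤ h := by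
    rw [hh']; exact div_nonneg (by linarith) (by positivity)
  have hdiffv : xp - x = -(h • v) := by rw [hxp]; abel
  have hnormd : ‖xp - x‖ = h * ‖v‖ := by
    rw [hdiffv, norm_neg, norm_smul, Real.norm_of_nonneg hh0]
  have hinner : ⟪v, xp - x⟫ = -(h * ‖v‖ ^ 2) := by
    rw [hdiffv, inner_neg_right, real_inner_smul_right,
      real_inner_self_eq_norm_sq]
  have key2 : -(h * ‖v‖ ^ 2) + L' / 2 * (h * ‖v‖) ^ 2 + Δ' * (h * ‖v‖)
      = -((‖v‖ - Δ') ^ 2 / (2 * L')) := by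
    rw [hh']; field_simp; ring
  have hA : f xp ≤ f x - (‖v‖ - Δ') ^ 2 / (2 * L') + δ' + δ := by
    have h1 := (hfδ xp).2
    have h2 := (hfδ x).1
    rw [hinner, hnormd] at hexit
    linarith [key2]
  have hnorm : ‖f' x‖ ≤ ‖v‖ + Δ := by
    have h1 : ‖f' x‖ - ‖v‖ ≤ ‖f' x - v‖ := norm_sub_norm_le _ _
    rw [norm_sub_rev] at h1
    linarith
  have hfx : 0 ≤ f x - fstar := sub_nonneg.2 (hlb x)
  have key : μ / L' * ((‖v‖ - Δ') / (‖v‖ + Δ)) ^ 2 * (f x - fstar)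
      ≤ (‖v‖ - Δ') ^ 2 / (2 * L') := by
    have h1 : 2 * μ * (f x - fstar) ≤ ‖f' x‖ ^ 2 := by
      have hp := hPL x
      have : μ * (f x - fstar) ≤ μ * (1 / (2 * μ) * ‖f' x‖ ^ 2) :=
        mul_le_mul_of_nonneg_left hp (le_of_lt hμ)
      rw [show μ * (1 / (2 * μ) * ‖f' x‖ ^ 2) = ‖f' x‖ ^ 2 / 2 by
        field_simp] at this
      linarith
    have h2 : ‖f' x‖ ^ 2 ≤ (‖v‖ + Δ) ^ 2 := by
      nlinarith [norm_nonneg (f' x)]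
    have hden : (0:ℝ) < (‖v‖ + Δ) ^ 2 := by positivity
    have heq : μ / L' * ((‖v‖ - Δ') / (‖v‖ + Δ)) ^ 2 * (f x - fstar)
        = (2 * μ * (f x - fstar) * (‖v‖ - Δ') ^ 2) / (2 * L' * (‖v‖ + Δ) ^ 2) := by
      field_simp
    have heq2 : (‖v‖ - Δ') ^ 2 / (2 * L')
        = ((‖v‖ + Δ) ^ 2 * (‖v‖ - Δ') ^ 2) / (2 * L' * (‖v‖ + Δ) ^ 2) := by
      field_simp
    rw [heq, heq2]
    have hnum : 2 * μ * (f x - fstar) * (‖v‖ - Δ') ^ 2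
        ≤ (‖v‖ + Δ) ^ 2 * (‖v‖ - Δ') ^ 2 := by
      exact mul_le_mul_of_nonneg_right (h1.trans h2) (sq_nonneg _)
    exact div_le_div_of_nonneg_right hnum (by positivity) |>.trans_eq rfl
  have hexp : (1 - μ / L' * ((‖v‖ - Δ') / (‖v‖ + Δ)) ^ 2) * (f x - fstar)
      = (f x - fstar) - μ / L' * ((‖v‖ - Δ') / (‖v‖ + Δ)) ^ 2 * (f x - fstar) := by
    ring
  linarith [hA, key, hexp.ge]
end
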